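/- Let d ≥ 2 be odd and let c be a nonzero integer. Then for all n ≥ 1, the integers W_n, W_n^d, and c all have the same sign, and |W_{n+1}| = |W_n|^d + |c| ≥ |W_n|^d. Consequently, |W_n| ≥ 2^{d^{n−2}} for all n ≥ 2. -/
import Mathlib


/-- `W d c n = φ^n(0)` where `φ(x) = x^d + c`. -/
def W (d : ℕ) (c : ℤ) (n : ℕ) : ℤ := (fun x : ℤ => x ^ d + c)^[n] 0

lemma W_succ (d : ℕ) (c : ℤ) (n : ℕ) : W d c (n + 1) = (W d c n) ^ d + c := by
  simp [W, Function.iterate_succ_apply']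

lemma W_pos (d : ℕ) (hd : 1 ≤ d) (c : ℤ) (hc : 0 < c) :
    ∀ n, 1 ≤ n → 0 < W d c n := by
  intro n hn
  induction n with
  | zero => omega
  | succ m ih =>
    rw [W_succ]
    have hm : 0 ≤ W d c m := by
      rcases Nat.eq_zero_or_pos m with h | h
      · simp [h, W]
      · exact (ih h).le
    have : 0 ≤ (W d c m) ^ d := pow_nonneg hm d
    linarith

lemma W_neg (d : ℕ) (hd : 1 ≤ d) (hdodd : Odd d) (c : ℤ) (hc : c < 0) :
    ∀ n, 1 ≤ n → W d c n < 0 := by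
  intro n hn
  induction n with
  | zero => omega
  | succ m ih =>
    rw [W_succ]
    have hm : W d c m ≤ 0 := by
      rcases Nat.eq_zero_or_pos m with h | h
      · simp [h, W]
      · exact (ih h).le
    have : (W d c m) ^ d ≤ 0 := hdodd.pow_nonpos hm
    linarith

/-- For odd `d ≥ 2` and `c ≠ 0`: for all `n ≥ 1` the integers `Wₙ`, `Wₙ^d` and `c`
have the same sign, `|W_{n+1}| = |Wₙ|^d + |c| ≥ |Wₙ|^d`, and consequently
`|Wₙ| ≥ 2^(d^(n-2))` for all `n ≥ 2`. -/
theorem growth_of_W (d : ℕ) (hd : 2 ≤ d) (hdodd : Odd d) (c : ℤ) (hc : c ≠ 0) :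
    (∀ n : ℕ, 1 ≤ n →
      Int.sign (W d c n) = Int.sign c ∧
      Int.sign ((W d c n) ^ d) = Int.sign c ∧
      |W d c (n + 1)| = |W d c n| ^ d + |c| ∧
      |W d c n| ^ d ≤ |W d c (n + 1)|) ∧
    (∀ n : ℕ, 2 ≤ n → (2 : ℤ) ^ (d ^ (n - 2)) ≤ |W d c n|) := by
  have hd1 : 1 ≤ d := by omega
  have main : ∀ n : ℕ, 1 ≤ n →
      Int.sign (W d c n) = Int.sign c ∧
      Int.sign ((W d c n) ^ d) = Int.sign c ∧
      |W d c (n + 1)| = |W d c n| ^ d + |c| ∧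
      |W d c n| ^ d ≤ |W d c (n + 1)| := by
    intro n hn
    rcases hc.lt_or_gt with hneg | hpos
    · have h1 : W d c n < 0 := W_neg d hd1 hdodd c hneg n hn
      have h2 : (W d c n) ^ d < 0 := hdodd.pow_neg h1
      have h3 : W d c (n + 1) < 0 := W_neg d hd1 hdodd c hneg (n + 1) (by omega)
      refine ⟨by rw [Int.sign_eq_neg_one_of_neg h1, Int.sign_eq_neg_one_of_neg hneg],
        by rw [Int.sign_eq_neg_one_of_neg h2, Int.sign_eq_neg_one_of_neg hneg], ?_, ?_⟩
      · rw [abs_of_neg h3, abs_of_neg h1, abs_of_neg hneg, W_succ,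
          hdodd.neg_pow]
        ring
      · rw [abs_of_neg h3, abs_of_neg h1, W_succ, hdodd.neg_pow]
        linarith
    · have h1 : 0 < W d c n := W_pos d hd1 c hpos n hn
      have h2 : 0 < (W d c n) ^ d := pow_pos h1 d
      have h3 : 0 < W d c (n + 1) := W_pos d hd1 c hpos (n + 1) (by omega)
      refine ⟨by rw [Int.sign_eq_one_of_pos h1, Int.sign_eq_one_of_pos hpos],
        by rw [Int.sign_eq_one_of_pos h2, Int.sign_eq_one_of_pos hpos], ?_, ?_⟩
      · rw [abs_of_pos h3, abs_of_pos h1, abs_of_pos hpos, W_succ]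
      · rw [abs_of_pos h3, abs_of_pos h1, W_succ]
        linarith
  refine ⟨main, ?_⟩
  intro n hn
  induction n with
  | zero => omega
  | succ m ih =>
    rcases Nat.lt_or_ge m 2 with h | h
    · -- m + 1 = 2, so m = 1
      have hm1 : m = 1 := by omega
      subst hm1
      have habs : |W d c 2| = |W d c 1| ^ d + |c| := (main 1 le_rfl).2.2.1
      have hW1 : W d c 1 = c := by simp [W]; positivity
      have hc1 : (1 : ℤ) ≤ |c| := Int.one_le_abs hc
      have : (1 : ℤ) ≤ |c| ^ d := one_le_pow₀ hc1
      simp only [Nat.sub_self, pow_zero, pow_one]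
      rw [habs, hW1]
      linarith
    · have ihm := ih h
      have h1 : |W d c m| ^ d ≤ |W d c (m + 1)| := (main m (by omega)).2.2.2
      have h2 : ((2 : ℤ) ^ (d ^ (m - 2))) ^ d ≤ |W d c m| ^ d :=
        pow_le_pow_left₀ (by positivity) ihm d
      calc (2 : ℤ) ^ d ^ (m + 1 - 2) = ((2 : ℤ) ^ (d ^ (m - 2))) ^ d := by
            rw [← pow_mul]
            congr 1
            have : m + 1 - 2 = (m - 2) + 1 := by omega
            rw [this, pow_succ]
        _ ≤ |W d c m| ^ d := h2
        _ ≤ |W d c (m + 1)| := h1
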